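/- If two indices i,j are drawn independently and uniformly from {1,...,n} and x' is obtained from x by a gossip average between i and j, then E[Var(x') | x] = (1 - 1/n)·Var(x), where Var(x) = (1/n)∑(x_k - x̄)² is the empirical variance. -/

import Mathlib

open Finset

noncomputable def mean {n : ℕ} (v : Fin n → ℝ) : ℝ := (∑ k, v k) / n

/-- Empirical variance. -/
noncomputable def empVar {n : ℕ} (v : Fin n → ℝ) : ℝ := (∑ k, (v k - mean v) ^ 2) / n

noncomputable def gossip {n : ℕ} (v : Fin n → ℝ) (i j : Fin n) : Fin n → ℝ :=
  fun k => if k = i ∨ k = j then (v i + v j) / 2 else v k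

/-!
A gossip step between `i ≠ j` keeps the sum of the entries, hence the mean `m`, and replaces
`(x i - m)² + (x j - m)²` by `2 ((x i + x j)/2 - m)²`, lowering `∑ (x k - m)²` by `(x i - x j)² / 2`.
Averaging this loss over all pairs `(i, j)` gives `(1/n²) ∑ᵢ ∑ⱼ (x i - x j)² / (2n) = Var(x) / n`,
because `∑ᵢ ∑ⱼ (x i - x j)² = 2 n² Var(x)`.
-/

section Gossip

variable {n : ℕ} (x : Fin n → ℝ)

theorem gossip_self (i : Fin n) : gossip x i i = x := by
  funext k
  by_cases hk : k = i
  · simp [gossip, hk]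
  · simp [gossip, hk]

theorem sum_comp_gossip (f : ℝ → ℝ) {i j : Fin n} (hij : i ≠ j) :
    ∑ k, f (gossip x i j k) = ∑ k, f (x k) + 2 * f ((x i + x j) / 2) - f (x i) - f (x j) := by
  have hchange : ∑ k, (f (gossip x i j k) - f (x k))
      = (f ((x i + x j) / 2) - f (x i)) + (f ((x i + x j) / 2) - f (x j)) := by
    rw [Fintype.sum_eq_add i j hij fun k hk => by simp [gossip, hk.1, hk.2]]
    simp [gossip]
  rw [sum_sub_distrib] at hchange
  linarith

theorem mean_gossip (i j : Fin n) : mean (gossip x i j) = mean x := by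
  obtain rfl | hij := eq_or_ne i j
  · rw [gossip_self]
  · rw [mean, mean, sum_comp_gossip x (fun t => t) hij]
    ring

theorem empVar_gossip (i j : Fin n) :
    empVar (gossip x i j) = empVar x - (x i - x j) ^ 2 / (2 * n) := by
  obtain rfl | hij := eq_or_ne i j
  · simp [gossip_self]
  have hn : (n : ℝ) ≠ 0 := Nat.cast_ne_zero.mpr (Fin.pos i).ne'
  rw [empVar, empVar, mean_gossip, sum_comp_gossip x (fun t => (t - mean x) ^ 2) hij]
  field_simp
  ring

end Gossip

theorem sum_sub_mean {n : ℕ} (x : Fin n → ℝ) : ∑ k, (x k - mean x) = 0 := by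
  obtain rfl | hn := n.eq_zero_or_pos
  · simp
  rw [sum_sub_distrib, sum_const, card_univ, Fintype.card_fin, nsmul_eq_mul, mean,
    mul_div_cancel₀ _ (Nat.cast_ne_zero.mpr hn.ne'), sub_self]

theorem sum_sum_sq_sub_eq_empVar {n : ℕ} (x : Fin n → ℝ) :
    ∑ i, ∑ j, (x i - x j) ^ 2 = 2 * n ^ 2 * empVar x := by
  obtain rfl | hn := n.eq_zero_or_pos
  · simp
  set a := fun k => x k - mean x
  have hdiff : ∀ i j, (x i - x j) ^ 2 = a i ^ 2 - 2 * (a i * a j) + a j ^ 2 := fun i j => by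
    simp only [a]
    ring
  have ha : ∑ k, a k = 0 := sum_sub_mean x
  simp only [hdiff, sum_add_distrib, sum_sub_distrib, ← mul_sum, ← sum_mul, ha, sum_const,
    card_univ, Fintype.card_fin, nsmul_eq_mul]
  rw [empVar]
  field_simp
  ring

theorem gossip_expected_var_general (n : ℕ) (x : Fin n → ℝ) :
    (∑ i, ∑ j, empVar (gossip x i j)) / (n : ℝ) ^ 2 = (1 - 1 / n) * empVar x := by
  obtain rfl | hpos := n.eq_zero_or_pos
  · simp [empVar]
  have hn : (n : ℝ) ≠ 0 := Nat.cast_ne_zero.mpr hpos.ne'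
  simp only [empVar_gossip, sum_sub_distrib, sum_const, card_univ, Fintype.card_fin,
    nsmul_eq_mul, ← sum_div, sum_sum_sq_sub_eq_empVar]
  field_simp

/-- With `i, j` i.i.d. uniform on `{1,…,n}`, the expected empirical variance after a gossip
step is `(1 - 1/n) * Var(x)`. -/
theorem gossip_expected_var (n : ℕ) (hn : 0 < n) (x : Fin n → ℝ) :
    (∑ i, ∑ j, empVar (gossip x i j)) / (n : ℝ) ^ 2 = (1 - 1 / n) * empVar x :=
  gossip_expected_var_general n x
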